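/- arXiv:1810.05522 — 2 statements merged into one kernel-verified Lean document; each statement's English description precedes it below -/
import Mathlib

section
/- Let n_1 = ⌊N(d−1)/2⌋ and let (s_k)_{k=0}^{n_1} be arbitrary complex numbers. Then V_(s) = Σ_{k,l=0}^{n_1} s_k s̄_l |R̃_{N,d;k+l}⟩⟨R̃_{N,d;k+l}| is an entanglement witness for the D-symmetric system: V_(s) is Hermitian, P_D V_(s) P_D = V_(s), and Tr(V_(s) σ) ≥ 0 for every pure fully separable D-symmetric state σ = (|ξ⟩⟨ξ|)^{⊗N} with σ = P_D σ P_D and ξ ∈ ℂ^d a unit vector. -/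
open scoped BigOperators ComplexConjugate ComplexOrder Matrix
noncomputable section
open MeasureTheory

namespace DSym

/-- Index set of the computational basis of `(ℂ^d)^{⊗N}`. -/
abbrev Idx (d N : ℕ) := Fin N → Fin d

/-- `|i| = i_1 + ⋯ + i_N`. -/
def wsum {d N : ℕ} (i : Idx d N) : ℕ := ∑ j, (i j : ℕ)

/-- `C(N,k)_d = #{i ∈ {0,…,d−1}^N : |i| = k}`. -/
def Ccount (d N k : ℕ) : ℕ := (Finset.univ.filter (fun i : Idx d N => wsum i = k)).card

/-- The D-symmetrizator `P_D`. -/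
def PD (d N : ℕ) : Matrix (Idx d N) (Idx d N) ℂ :=
  Matrix.of fun i j => if wsum i = wsum j then ((Ccount d N (wsum j) : ℂ))⁻¹ else 0

/-- The symmetrizator `P_S`. -/
def PS (d N : ℕ) : Matrix (Idx d N) (Idx d N) ℂ :=
  Matrix.of fun i j =>
    ((N.factorial : ℂ))⁻¹ *
      ((Finset.univ.filter (fun σ : Equiv.Perm (Fin N) => i = fun k => j (σ k))).card : ℂ)

/-- The product state `|ξ^1⟩⟨ξ^1| ⊗ ⋯ ⊗ |ξ^N⟩⟨ξ^N|` as a matrix. -/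
def prodProj {d N : ℕ} (ξ : Fin N → (Fin d → ℂ)) : Matrix (Idx d N) (Idx d N) ℂ :=
  Matrix.of fun i i' => ∏ j, ξ j (i j) * conj (ξ j (i' j))

/-- Full separability of a multipartite state. -/
def FullySep {d N : ℕ} (ρ : Matrix (Idx d N) (Idx d N) ℂ) : Prop :=
  ∃ (n : ℕ) (lam : Fin n → ℝ) (ξ : Fin n → Fin N → (Fin d → ℂ)),
    (∀ α, 0 < lam α) ∧ (∀ α j, ∑ x, Complex.normSq (ξ α j x) = 1) ∧
      ρ = ∑ α, (lam α : ℂ) • prodProj (ξ α)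

/-- The restricted Dicke vector `|R_{N,d;k}⟩`. -/
def Rvec (d N k : ℕ) : Idx d N → ℂ := fun i => if wsum i = k then 1 else 0

/-- The rank-one operator `|R_{N,d;k}⟩⟨R_{N,d;k}|`. -/
def RProj (d N k : ℕ) : Matrix (Idx d N) (Idx d N) ℂ :=
  Matrix.vecMulVec (Rvec d N k) (star (Rvec d N k))

/-- Diagonal restricted Dicke state with coefficients `p`. -/
def dickeDiag (d N : ℕ) (p : ℕ → ℝ) : Matrix (Idx d N) (Idx d N) ℂ :=
  ∑ k ∈ Finset.range (N * (d - 1) + 1), (p k : ℂ) • RProj d N k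

/-- Partial transposition of the first `m` tensor factors (entrywise). -/
def Gamma {d N : ℕ} (m : ℕ) (ρ : Matrix (Idx d N) (Idx d N) ℂ) :
    Matrix (Idx d N) (Idx d N) ℂ :=
  Matrix.of fun i j =>
    ρ (fun k => if (k : ℕ) < m then j k else i k) (fun k => if (k : ℕ) < m then i k else j k)

/-- D-symmetry of a state: `ρ = P_D ρ P_D`. -/
def IsDSymm {d N : ℕ} (ρ : Matrix (Idx d N) (Idx d N) ℂ) : Prop :=
  ρ = PD d N * ρ * PD d N

/-- A pure fully separable D-symmetric state `σ = (|ξ⟩⟨ξ|)^{⊗N}`, `ξ` a unit vector. -/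
def PureDSymmProd {d N : ℕ} (σ : Matrix (Idx d N) (Idx d N) ℂ) : Prop :=
  ∃ ξ : Fin d → ℂ,
    (∑ x, Complex.normSq (ξ x) = 1) ∧ σ = prodProj (fun _ : Fin N => ξ) ∧ IsDSymm σ

/-- Entanglement witness for the D-symmetric system. -/
def IsDWitness {d N : ℕ} (W : Matrix (Idx d N) (Idx d N) ℂ) : Prop :=
  W.IsHermitian ∧ W = PD d N * W * PD d N ∧
    ∀ σ : Matrix (Idx d N) (Idx d N) ℂ, PureDSymmProd σ → 0 ≤ (W * σ).trace

/-- The dual restricted Dicke vector. -/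
def Rtilde (d N k : ℕ) : Idx d N → ℂ := ((Ccount d N k : ℂ))⁻¹ • Rvec d N k

/-- Solution of the generalized moment problem on `[0,∞)`. -/
def IsGenMomentSolution (n : ℕ) (p : ℕ → ℝ) : Prop :=
  ∃ (σ : Measure ℝ) (M : ℝ), IsFiniteMeasure σ ∧ σ {x | x < 0} = 0 ∧
    (∀ k ≤ n, Integrable (fun t => t ^ k) σ) ∧ 0 ≤ M ∧
    (∀ k < n, p k = ∫ t, t ^ k ∂σ) ∧ p n = (∫ t, t ^ n ∂σ) + M

/-- Solution of the strict moment problem on `[0,∞)`. -/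
def IsStrictMomentSolution (n : ℕ) (p : ℕ → ℝ) : Prop :=
  ∃ σ : Measure ℝ, IsFiniteMeasure σ ∧ σ {x | x < 0} = 0 ∧
    (∀ k ≤ n, Integrable (fun t => t ^ k) σ) ∧ (∀ k ≤ n, p k = ∫ t, t ^ k ∂σ)


/-- The normalization constant `C_z = (Σ_{i=0}^{d−1} |z|^{2i})^{−1/2}`. -/
def Cz (d : ℕ) (z : ℂ) : ℝ := (∑ j ∈ Finset.range d, ‖z‖ ^ (2 * j)) ^ (-(1/2 : ℝ))

/-- The vector `ζ_z = C_z Σ_{i=0}^{d−1} z^i |i⟩`. -/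
def zeta (d : ℕ) (z : ℂ) : Fin d → ℂ := fun i => (Cz d z : ℂ) * z ^ (i : ℕ)

/-- The basis vector `|d−1⟩`. -/
def topVec (d : ℕ) : Fin d → ℂ := fun x => if (x : ℕ) = d - 1 then 1 else 0

/-- Sum of the first `m` coordinates of a tuple. -/
def wsumFirst {d N : ℕ} (m : ℕ) (i : Idx d N) : ℕ :=
  ∑ j ∈ Finset.univ.filter (fun j : Fin N => (j : ℕ) < m), (i j : ℕ)

/-- Sum of the last `N − m` coordinates of a tuple. -/
def wsumLast {d N : ℕ} (m : ℕ) (i : Idx d N) : ℕ :=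
  ∑ j ∈ Finset.univ.filter (fun j : Fin N => m ≤ (j : ℕ)), (i j : ℕ)

/-- The vector `|R_{m,d;a}⟩ ⊗ |R_{N−m,d;b}⟩`, viewed inside `(ℂ^d)^{⊗N}`. -/
def splitVec (d N m : ℕ) (a b : ℤ) : Idx d N → ℂ :=
  fun i => if (wsumFirst m i : ℤ) = a ∧ (wsumLast m i : ℤ) = b then 1 else 0

/-- The operator `A_s` from the decomposition of `Γ_m(ρ)`. -/
def Amat (d N m : ℕ) (p : ℕ → ℝ) (s : ℤ) : Matrix (Idx d N) (Idx d N) ℂ :=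
  ∑ k ∈ Finset.Icc (max 0 (-s)) (min ((m : ℤ) * ((d : ℤ) - 1)) ((((N : ℤ) - (m : ℤ)) * ((d : ℤ) - 1)) - s)),
  ∑ l ∈ Finset.Icc (max 0 (-s)) (min ((m : ℤ) * ((d : ℤ) - 1)) ((((N : ℤ) - (m : ℤ)) * ((d : ℤ) - 1)) - s)),
    (p (k + l + s).toNat : ℂ) •
      Matrix.vecMulVec (splitVec d N m k (k + s)) (star (splitVec d N m l (l + s)))

/-- The permutation unitary `F_σ`, `F_σ|ξ_1,…,ξ_N⟩ = |ξ_{σ⁻¹(1)},…,ξ_{σ⁻¹(N)}⟩`. -/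
def Fmat (d N : ℕ) (σ : Equiv.Perm (Fin N)) : Matrix (Idx d N) (Idx d N) ℂ :=
  Matrix.of fun x i => if x = fun k => i (σ.symm k) then 1 else 0

/-- Partial transposition with respect to the binary string `b`. -/
def partialT {d N : ℕ} (b : Fin N → Bool) (ρ : Matrix (Idx d N) (Idx d N) ℂ) :
    Matrix (Idx d N) (Idx d N) ℂ :=
  Matrix.of fun i j => ρ (fun k => if b k then j k else i k) (fun k => if b k then i k else j k)

end DSym
end

/-! If `ξ^{⊗N}` is D-symmetric, then `∏_c |ξ(i_c)|²` depends only on the weight `|i|`, namely it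
equals `H(|i|)` with `H(m) = |⟨R̃_m, ξ^{⊗N}⟩|²`. Comparing tuples of equal weight that differ in two
coordinates shows that either `ξ(0) ≠ 0` and `H` is geometric, `H(m) = H(0) ρ^m`, or `H` vanishes
below the top weight `N(d-1)`. In both cases `H(k+l)² = H(2k) H(2l)` whenever `2k, 2l ≤ N(d-1)`, so
`Tr(V σ) = Σ s_k s̄_l H(k+l) = |Σ_k s_k √H(2k)|² ≥ 0`. -/

open Matrix

lemma Matrix.IsHermitian.mul_vecMulVec_star_mul {n α : Type*} [Fintype n] [CommSemiring α]
    [StarRing α] {M : Matrix n n α} (hM : M.IsHermitian) (v : n → α) :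
    M * vecMulVec v (star v) * M = vecMulVec (M *ᵥ v) (star (M *ᵥ v)) := by
  rw [mul_vecMulVec, vecMulVec_mul, star_mulVec, hM.eq]

lemma Matrix.trace_vecMulVec_star_mul_vecMulVec_star {n : Type*} [Fintype n] (w v : n → ℂ) :
    trace (vecMulVec w (star w) * vecMulVec v (star v)) = Complex.normSq (star w ⬝ᵥ v) := by
  rw [vecMulVec_mul_vecMulVec, trace_vecMulVec, dotProduct_smul, smul_eq_mul, dotProduct_star,
    dotProduct_comm v, Complex.star_def, Complex.mul_conj]

lemma isHermitian_sum_sum_mul_conj_smul {n ι : Type*} [AddCommMagma ι] (S : Finset ι) (s : ι → ℂ)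
    (P : ι → Matrix n n ℂ) (hP : ∀ m, (P m).IsHermitian) :
    (∑ k ∈ S, ∑ l ∈ S, (s k * conj (s l)) • P (k + l)).IsHermitian := by
  simp only [IsHermitian, conjTranspose_sum, conjTranspose_smul, (hP _).eq]
  rw [Finset.sum_comm]
  refine Finset.sum_congr rfl fun k _ => Finset.sum_congr rfl fun l _ => ?_
  rw [Complex.star_def, map_mul, Complex.conj_conj, mul_comm, add_comm]

lemma sum_sum_mul_conj_mul_nonneg {ι : Type*} (S : Finset ι) (s : ι → ℂ) (f : ι → ℝ) :
    0 ≤ ∑ k ∈ S, ∑ l ∈ S, s k * conj (s l) * ((f k * f l : ℝ) : ℂ) := by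
  have : ∑ k ∈ S, ∑ l ∈ S, s k * conj (s l) * ((f k * f l : ℝ) : ℂ)
      = (∑ k ∈ S, s k * f k) * conj (∑ k ∈ S, s k * f k) := by
    rw [map_sum, Finset.sum_mul_sum]
    refine Finset.sum_congr rfl fun k _ => Finset.sum_congr rfl fun l _ => ?_
    simp only [map_mul, Complex.conj_ofReal, Complex.ofReal_mul]
    ring
  rw [this, Complex.mul_conj]
  exact_mod_cast Complex.normSq_nonneg _

namespace DSym

variable {d N : ℕ}

lemma exists_wsum_eq (hd : 0 < d) : ∀ {N m : ℕ}, m ≤ N * (d - 1) → ∃ i : Idx d N, wsum i = m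
  | 0, m, hm => ⟨Fin.elim0, by rw [zero_mul, Nat.le_zero] at hm; simp [wsum, hm]⟩
  | N + 1, m, hm => by
    obtain ⟨i, hi⟩ := exists_wsum_eq hd (N := N) (m := m - min m (d - 1))
      (by rw [Nat.succ_mul] at hm; omega)
    refine ⟨Fin.cons ⟨min m (d - 1), by omega⟩ i, ?_⟩
    simp only [wsum, Fin.sum_univ_succ, Fin.cons_zero, Fin.cons_succ] at hi ⊢
    omega

lemma exists_val_lt_of_wsum_lt {i : Idx d N} (h : wsum i < N * (d - 1)) :
    ∃ c, (i c : ℕ) < d - 1 := by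
  by_contra! hge
  have : ∑ _c : Fin N, (d - 1) ≤ wsum i := Finset.sum_le_sum fun c _ => hge c
  rw [Finset.sum_const, Finset.card_univ, Fintype.card_fin, smul_eq_mul] at this
  omega

section WeightedProduct

variable {u : Fin d → ℝ} {H : ℕ → ℝ} {n : ℕ}

lemma mul_mul_pow_eq_of_prod_eq_wsum (hH : ∀ i : Idx d (n + 2), ∏ c, u (i c) = H (wsum i))
    (a b c : Fin d) : u a * u b * u c ^ n = H (a + b + n * c) := by
  simpa [wsum, Fin.prod_univ_succ, Fin.sum_univ_succ, mul_assoc, add_assoc]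
    using hH (Fin.cons a (Fin.cons b fun _ => c))

lemma zero_eq_pow_of_prod_eq_wsum (hd : 0 < d)
    (hH : ∀ i : Idx d (n + 2), ∏ c, u (i c) = H (wsum i)) : H 0 = u ⟨0, hd⟩ ^ (n + 2) := by
  have h := mul_mul_pow_eq_of_prod_eq_wsum hH ⟨0, hd⟩ ⟨0, hd⟩ ⟨0, hd⟩
  simp only [add_zero, mul_zero] at h
  rw [← h]
  ring

lemma apply_eq_geometric_of_prod_eq_wsum (hd : 1 < d)
    (hH : ∀ i : Idx d (n + 2), ∏ c, u (i c) = H (wsum i)) (h0 : u ⟨0, by omega⟩ ≠ 0) (x : Fin d) :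
    u x = u ⟨0, by omega⟩ * (u ⟨1, hd⟩ / u ⟨0, by omega⟩) ^ (x : ℕ) := by
  obtain ⟨x, hx⟩ := x
  induction x with
  | zero => simp
  | succ x ih =>
    have h1 := mul_mul_pow_eq_of_prod_eq_wsum hH ⟨x + 1, hx⟩ ⟨0, by omega⟩ ⟨0, by omega⟩
    have h2 := mul_mul_pow_eq_of_prod_eq_wsum hH ⟨x, by omega⟩ ⟨1, hd⟩ ⟨0, by omega⟩
    simp only [add_zero, mul_zero] at h1 h2
    have hstep : u ⟨x + 1, hx⟩ * u ⟨0, by omega⟩ = u ⟨x, by omega⟩ * u ⟨1, hd⟩ :=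
      mul_right_cancel₀ (pow_ne_zero n h0) (h1.trans h2.symm)
    rw [ih (by omega)] at hstep
    apply mul_right_cancel₀ h0
    rw [hstep, Fin.val_mk, Fin.val_mk, pow_succ]
    field_simp

lemma apply_eq_zero_of_prod_eq_wsum (hd : 0 < d)
    (hH : ∀ i : Idx d (n + 2), ∏ c, u (i c) = H (wsum i)) (h0 : u ⟨0, hd⟩ = 0) (x : Fin d)
    (hx : (x : ℕ) + 1 < d) : u x = 0 := by
  obtain ⟨x, hx'⟩ := x
  induction x with
  | zero => exact h0
  | succ x ih =>
    have h1 := mul_mul_pow_eq_of_prod_eq_wsum hH ⟨x + 2, hx⟩ ⟨x, by omega⟩ ⟨x + 1, hx'⟩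
    have h2 := mul_mul_pow_eq_of_prod_eq_wsum hH ⟨x + 1, hx'⟩ ⟨x + 1, hx'⟩ ⟨x + 1, hx'⟩
    rw [ih (by omega) (Nat.lt_of_succ_lt hx)] at h1
    have hw : x + 2 + x + n * (x + 1) = x + 1 + (x + 1) + n * (x + 1) := by ring
    rw [hw, ← h2] at h1
    exact pow_eq_zero_iff (n := n + 2) (by omega) |>.mp (by linear_combination -h1)

lemma exists_geometric_of_prod_eq_wsum (hd : 1 < d)
    (hH : ∀ i : Idx d (n + 2), ∏ c, u (i c) = H (wsum i)) (h0 : H 0 ≠ 0) :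
    ∃ ρ : ℝ, ∀ m ≤ (n + 2) * (d - 1), H m = H 0 * ρ ^ m := by
  have hu0 : u ⟨0, by omega⟩ ≠ 0 := by
    rintro hu0
    simp [zero_eq_pow_of_prod_eq_wsum (by omega) hH, hu0] at h0
  refine ⟨u ⟨1, hd⟩ / u ⟨0, by omega⟩, fun m hm => ?_⟩
  obtain ⟨i, rfl⟩ := exists_wsum_eq (by omega) hm
  rw [← hH i, zero_eq_pow_of_prod_eq_wsum (by omega) hH,
    Finset.prod_congr rfl fun c _ => apply_eq_geometric_of_prod_eq_wsum hd hH hu0 (i c),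
    Finset.prod_mul_distrib, Finset.prod_pow_eq_pow_sum, Finset.prod_const, Finset.card_univ,
    Fintype.card_fin, wsum]

lemma eq_zero_of_lt_of_prod_eq_wsum (hd : 0 < d)
    (hH : ∀ i : Idx d (n + 2), ∏ c, u (i c) = H (wsum i)) (h0 : H 0 = 0) {m : ℕ}
    (hm : m < (n + 2) * (d - 1)) : H m = 0 := by
  have hu0 : u ⟨0, hd⟩ = 0 := by
    rwa [zero_eq_pow_of_prod_eq_wsum hd hH, pow_eq_zero_iff (by omega)] at h0
  obtain ⟨i, rfl⟩ := exists_wsum_eq hd hm.le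
  obtain ⟨c, hc⟩ := exists_val_lt_of_wsum_lt hm
  rw [← hH i]
  exact Finset.prod_eq_zero (Finset.mem_univ c)
    (apply_eq_zero_of_prod_eq_wsum hd hH hu0 (i c) (by omega))

end WeightedProduct

lemma sq_add_eq_mul_of_prod_eq_wsum {u : Fin d → ℝ} {H : ℕ → ℝ} (hd : 2 ≤ d) (hN : 2 ≤ N)
    (hH : ∀ i : Idx d N, ∏ c, u (i c) = H (wsum i)) {k l : ℕ}
    (hk : 2 * k ≤ N * (d - 1)) (hl : 2 * l ≤ N * (d - 1)) :
    H (k + l) ^ 2 = H (2 * k) * H (2 * l) := by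
  obtain ⟨n, rfl⟩ : ∃ n, N = n + 2 := ⟨N - 2, by omega⟩
  by_cases h0 : H 0 = 0
  · have of_lt : ∀ {a b : ℕ}, a < b → 2 * b ≤ (n + 2) * (d - 1) →
        H (a + b) ^ 2 = H (2 * a) * H (2 * b) := fun hab hb => by
      rw [eq_zero_of_lt_of_prod_eq_wsum (by omega) hH h0 (by omega : _ + _ < _),
        eq_zero_of_lt_of_prod_eq_wsum (by omega) hH h0 (by omega : 2 * _ < _)]
      ring
    rcases lt_trichotomy k l with h | rfl | h
    · exact of_lt h hl
    · rw [← two_mul, sq]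
    · rw [add_comm, mul_comm]; exact of_lt h hk
  · obtain ⟨ρ, hρ⟩ := exists_geometric_of_prod_eq_wsum hd hH h0
    rw [hρ _ (by omega), hρ _ hk, hρ _ hl]
    ring

lemma Rtilde_apply (k : ℕ) (i : Idx d N) :
    Rtilde d N k i = if wsum i = k then ((Ccount d N k : ℂ))⁻¹ else 0 := by
  simp [Rtilde, Rvec]

lemma star_Rtilde (k : ℕ) : star (Rtilde d N k) = Rtilde d N k := by
  ext i
  rw [Pi.star_apply, Rtilde_apply]
  split_ifs <;> simp

lemma Rtilde_dotProduct_Rtilde (k l : ℕ) :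
    Rtilde d N k ⬝ᵥ Rtilde d N l = if k = l then ((Ccount d N k : ℂ))⁻¹ else 0 := by
  simp only [dotProduct, Rtilde_apply, ite_zero_mul_ite_zero]
  split_ifs with hkl
  · subst hkl
    simp only [and_self]
    rw [← Finset.sum_filter, Finset.sum_const, nsmul_eq_mul]
    change (Ccount d N k : ℂ) * _ = _
    -- an empty weight class is covered by `0⁻¹ = 0`
    rcases eq_or_ne (Ccount d N k : ℂ) 0 with h | h
    · simp [h]
    · field_simp
  · refine Finset.sum_eq_zero fun i _ => if_neg ?_
    rintro ⟨rfl, rfl⟩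
    exact hkl rfl

lemma PD_apply (i j : Idx d N) : PD d N i j = Rtilde d N (wsum i) j := by
  simp only [PD, Rtilde_apply, of_apply, eq_comm]
  split_ifs with h <;> simp [h]

lemma PD_isHermitian : (PD d N).IsHermitian := by
  ext i j
  simp only [conjTranspose_apply, PD, of_apply, eq_comm (a := wsum j)]
  split_ifs with h <;> simp [h]

lemma PD_mulVec_apply (v : Idx d N → ℂ) (i : Idx d N) :
    (PD d N *ᵥ v) i = Rtilde d N (wsum i) ⬝ᵥ v := by
  simp [mulVec, PD_apply]

lemma PD_mulVec_Rtilde (k : ℕ) : PD d N *ᵥ Rtilde d N k = Rtilde d N k := by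
  ext i
  rw [PD_mulVec_apply, Rtilde_dotProduct_Rtilde, Rtilde_apply]
  split_ifs with h <;> simp [h]

lemma PD_mul_vecMulVec_Rtilde_mul_PD (k : ℕ) :
    PD d N * vecMulVec (Rtilde d N k) (star (Rtilde d N k)) * PD d N
      = vecMulVec (Rtilde d N k) (star (Rtilde d N k)) := by
  rw [PD_isHermitian.mul_vecMulVec_star_mul, PD_mulVec_Rtilde]

def tensorPow (ξ : Fin d → ℂ) : Idx d N → ℂ := fun i => ∏ c, ξ (i c)

lemma prodProj_const (ξ : Fin d → ℂ) :
    prodProj (fun _ : Fin N => ξ) = vecMulVec (tensorPow ξ) (star (tensorPow ξ)) := by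
  ext i j
  simp [prodProj, tensorPow, vecMulVec_apply, Finset.prod_mul_distrib]

lemma prod_normSq_eq_of_isDSymm {ξ : Fin d → ℂ} (h : IsDSymm (prodProj fun _ : Fin N => ξ))
    (i : Idx d N) :
    ∏ c, Complex.normSq (ξ (i c)) = Complex.normSq (Rtilde d N (wsum i) ⬝ᵥ tensorPow ξ) := by
  rw [IsDSymm, prodProj_const, PD_isHermitian.mul_vecMulVec_star_mul] at h
  have hii := congrFun (congrFun h i) i
  simp only [vecMulVec_apply, Pi.star_apply, Complex.star_def, Complex.mul_conj,
    PD_mulVec_apply, Complex.ofReal_inj] at hii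
  rw [← hii, tensorPow, map_prod]

lemma trace_vecMulVec_Rtilde_mul_prodProj (k : ℕ) (ξ : Fin d → ℂ) :
    (vecMulVec (Rtilde d N k) (star (Rtilde d N k)) * prodProj fun _ : Fin N => ξ).trace
      = Complex.normSq (Rtilde d N k ⬝ᵥ tensorPow ξ) := by
  rw [prodProj_const, trace_vecMulVec_star_mul_vecMulVec_star, star_Rtilde]

lemma normSq_Rtilde_add_dotProduct_tensorPow (hd : 2 ≤ d) (hN : 2 ≤ N) {ξ : Fin d → ℂ}
    (hσ : IsDSymm (prodProj fun _ : Fin N => ξ)) {k l : ℕ} (hk : 2 * k ≤ N * (d - 1))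
    (hl : 2 * l ≤ N * (d - 1)) :
    Complex.normSq (Rtilde d N (k + l) ⬝ᵥ tensorPow ξ)
      = ‖Rtilde d N (2 * k) ⬝ᵥ tensorPow ξ‖ * ‖Rtilde d N (2 * l) ⬝ᵥ tensorPow ξ‖ := by
  have hsq := sq_add_eq_mul_of_prod_eq_wsum (u := fun x => Complex.normSq (ξ x))
    (H := fun m => Complex.normSq (Rtilde d N m ⬝ᵥ tensorPow ξ)) hd hN
    (prod_normSq_eq_of_isDSymm hσ) hk hl
  simp only [Complex.normSq_eq_norm_sq] at hsq ⊢
  exact (pow_left_inj₀ (by positivity) (by positivity) two_ne_zero).mp (by rw [hsq]; ring)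

theorem stmt5 (d N : ℕ) (hd : 2 ≤ d) (hN : 2 ≤ N) (s : ℕ → ℂ)
    (n1 : ℕ) (hn1 : n1 = N * (d - 1) / 2)
    (V : Matrix (Idx d N) (Idx d N) ℂ)
    (hV : V = ∑ k ∈ Finset.range (n1 + 1), ∑ l ∈ Finset.range (n1 + 1),
      (s k * conj (s l)) •
        Matrix.vecMulVec (Rtilde d N (k + l)) (star (Rtilde d N (k + l)))) :
    V.IsHermitian ∧ PD d N * V * PD d N = V ∧
      ∀ σ : Matrix (Idx d N) (Idx d N) ℂ, PureDSymmProd σ → 0 ≤ (V * σ).trace := by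
  subst hV
  refine ⟨isHermitian_sum_sum_mul_conj_smul _ s
    (fun m => vecMulVec (Rtilde d N m) (star (Rtilde d N m)))
    (fun m => (posSemidef_vecMulVec_self_star _).isHermitian), ?_, ?_⟩
  · simp only [Matrix.mul_sum, Matrix.sum_mul, Matrix.mul_smul, Matrix.smul_mul,
      PD_mul_vecMulVec_Rtilde_mul_PD]
  rintro σ ⟨ξ, -, rfl, hσ⟩
  have hrange : ∀ k ∈ Finset.range (n1 + 1), 2 * k ≤ N * (d - 1) := fun k hk => by
    rw [Finset.mem_range] at hk
    omega
  simp only [Matrix.sum_mul, Matrix.trace_sum, Matrix.smul_mul, Matrix.trace_smul, smul_eq_mul,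
    trace_vecMulVec_Rtilde_mul_prodProj]
  rw [Finset.sum_congr rfl fun k hk => Finset.sum_congr rfl fun l hl => by
    rw [normSq_Rtilde_add_dotProduct_tensorPow hd hN hσ (hrange k hk) (hrange l hl)]]
  exact sum_sum_mul_conj_mul_nonneg _ s _

end DSym
end

section
/- Let m ≥ 1 with 2m < N. A diagonal restricted Dicke state ρ = Σ_{k=0}^{N(d−1)} p_k |R_{N,d;k}⟩⟨R_{N,d;k}| (p_k ≥ 0) is m-PPT if and only if the matrices (p_{i+j+l})_{i,j=0}^{m(d−1)} are positive semidefinite for every l = 0, 1, …, (N−2m)(d−1). -/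
open scoped BigOperators ComplexConjugate ComplexOrder Matrix
/-! The entry of `Γ_m(ρ)` at `(i, j)` only depends on the weight pairs `(a, b)` of `i` and `j`,
`a` being the weight of the first `m` sites and `b` that of the remaining `N - m`: it is
`p (a_j + b_i)` if `b_i - a_i = b_j - a_j`, and `0` otherwise. Every pair in
`[0, m(d-1)] × [0, (N-m)(d-1)]` occurs, so `Γ_m(ρ)` is PSD iff this real matrix on weight pairs is.
That matrix is block diagonal in `s = b - a`, the block of `s` being the Hankel matrix
`(p (a + a' + s))` over the admissible `a`. For `0 ≤ s ≤ (N-2m)(d-1)` this is the full Hankel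
matrix of the statement; any other block becomes, after shifting `a` by a suitable `c`, a principal
submatrix of the full one with `l = s + 2c`. -/

namespace Matrix

theorem posSemidef_submatrix_iff_of_surjective {m n R : Type*} [Ring R] [PartialOrder R]
    [StarRing R] {M : Matrix n n R} {f : m → n} (hf : Function.Surjective f) :
    (M.submatrix f f).PosSemidef ↔ M.PosSemidef := by
  refine ⟨fun h => ?_, fun h => h.submatrix f⟩
  simpa [submatrix_submatrix, (Function.rightInverse_surjInv hf).comp_eq_id] using
    h.submatrix (Function.surjInv hf)

variable {𝕜 : Type*} [RCLike 𝕜] {m n o ι S : Type*}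

open scoped MatrixOrder in
theorem PosSemidef.blockDiagonal [Fintype m] [DecidableEq m] [Fintype o] [DecidableEq o]
    {M : o → Matrix m m 𝕜} (hM : ∀ k, (M k).PosSemidef) :
    (Matrix.blockDiagonal M).PosSemidef := by
  choose B hB using fun k => CStarAlgebra.nonneg_iff_eq_star_mul_self.mp (hM k).nonneg
  rw [show M = fun k => (B k)ᴴ * B k from funext hB, blockDiagonal_mul (fun k => (B k)ᴴ) B,
    ← blockDiagonal_conjTranspose]
  exact posSemidef_conjTranspose_mul_self _

theorem posSemidef_of_blocks [Fintype ι] [Fintype m] [DecidableEq m] [DecidableEq S]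
    {H : S → Matrix m m 𝕜} (hH : ∀ s, (H s).PosSemidef) (σ : ι → S) (κ : ι → m) :
    (of fun i j => if σ i = σ j then H (σ i) (κ i) (κ j) else 0).PosSemidef := by
  let T := Finset.univ.image σ
  have hσ (i : ι) : σ i ∈ T := Finset.mem_image_of_mem σ (Finset.mem_univ i)
  convert (PosSemidef.blockDiagonal fun t : T => hH t).submatrix
    (fun i => (κ i, (⟨σ i, hσ i⟩ : T))) using 1
  ext i j
  simp [blockDiagonal_apply, Subtype.ext_iff]

theorem posSemidef_map_ofReal_iff [Fintype n] {A : Matrix n n ℝ} :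
    (A.map ((↑) : ℝ → ℂ)).PosSemidef ↔ A.PosSemidef := by
  have hH : (A.map ((↑) : ℝ → ℂ)).IsHermitian ↔ A.IsHermitian := by
    rw [IsHermitian, IsHermitian, ← conjTranspose_map _ fun _ => by simp]
    exact (Matrix.map_injective Complex.ofReal_injective).eq_iff
  have hQ (x : n → ℝ) :
      star (fun i => (x i : ℂ)) ⬝ᵥ (A.map ((↑) : ℝ → ℂ) *ᵥ fun i => (x i : ℂ)) =
        ((star x ⬝ᵥ (A *ᵥ x) : ℝ) : ℂ) := by
    simp [dotProduct, mulVec]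
  refine ⟨fun h => ?_, fun h => ?_⟩
  · refine posSemidef_iff_dotProduct_mulVec.mpr ⟨hH.mp h.isHermitian, fun x => ?_⟩
    simpa [hQ] using h.dotProduct_mulVec_nonneg (fun i => (x i : ℂ))
  · classical
    open scoped MatrixOrder in
    obtain ⟨B, rfl⟩ := CStarAlgebra.nonneg_iff_eq_star_mul_self.mp h.nonneg
    convert posSemidef_conjTranspose_mul_self (B.map ((↑) : ℝ → ℂ)) using 1
    ext i j
    simp [Matrix.mul_apply]

end Matrix

open Finset

theorem Fin.card_filter_le_val {N : ℕ} (m : ℕ) : #{j : Fin N | m ≤ (j : ℕ)} = N - m := by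
  have := card_filter_add_card_filter_not (s := univ) fun j : Fin N => (j : ℕ) < m
  simp only [not_lt, Fin.card_filter_val_lt, card_univ, Fintype.card_fin] at this
  omega

theorem Finset.exists_sum_eq_of_le_card_mul {ι : Type*} (s : Finset ι) {c w : ℕ}
    (hw : w ≤ #s * c) : ∃ g : ι → ℕ, (∀ j, g j ≤ c) ∧ ∑ j ∈ s, g j = w := by
  classical
  induction s using Finset.induction_on generalizing w with
  | empty => exact ⟨0, fun _ => Nat.zero_le c, by simp_all⟩
  | insert j s hj ih =>
    rw [card_insert_of_notMem hj] at hw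
    obtain ⟨g, hgc, hgs⟩ := ih (w := w - min c w) (by rw [Nat.add_one_mul] at hw; omega)
    refine ⟨Function.update g j (min c w), fun k => ?_, ?_⟩
    · rcases eq_or_ne k j with rfl | hk <;> simp [*]
    · rw [sum_insert hj, Function.update_self,
        sum_congr rfl fun k hk => Function.update_of_ne (ne_of_mem_of_not_mem hk hj) _ _, hgs]
      omega

namespace DSym

open Matrix

section Weights

variable {d N : ℕ}

lemma wsum_eq_wsumFirst_add_wsumLast (m : ℕ) (i : Idx d N) :
    wsum i = wsumFirst m i + wsumLast m i := by
  rw [wsum, wsumFirst, wsumLast, ← sum_filter_add_sum_filter_not univ fun j : Fin N => (j : ℕ) < m]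
  simp only [not_lt]

lemma wsum_le (i : Idx d N) : wsum i ≤ N * (d - 1) :=
  calc wsum i ≤ #(univ : Finset (Fin N)) • (d - 1) :=
        sum_le_card_nsmul _ _ _ fun j _ => Nat.le_sub_one_of_lt (i j).isLt
    _ = N * (d - 1) := by rw [card_univ, Fintype.card_fin, smul_eq_mul]

lemma wsumFirst_le (m : ℕ) (i : Idx d N) : wsumFirst m i ≤ m * (d - 1) :=
  calc wsumFirst m i ≤ #{j : Fin N | (j : ℕ) < m} • (d - 1) :=
        sum_le_card_nsmul _ _ _ fun j _ => Nat.le_sub_one_of_lt (i j).isLt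
    _ ≤ m * (d - 1) := by
        rw [Fin.card_filter_val_lt, smul_eq_mul]
        exact Nat.mul_le_mul_right _ (min_le_right _ _)

lemma wsumLast_le (m : ℕ) (i : Idx d N) : wsumLast m i ≤ (N - m) * (d - 1) :=
  calc wsumLast m i ≤ #{j : Fin N | m ≤ (j : ℕ)} • (d - 1) :=
        sum_le_card_nsmul _ _ _ fun j _ => Nat.le_sub_one_of_lt (i j).isLt
    _ = (N - m) * (d - 1) := by rw [Fin.card_filter_le_val, smul_eq_mul]

lemma wsumFirst_ite (m : ℕ) (i j : Idx d N) :
    wsumFirst m (fun k => if (k : ℕ) < m then j k else i k) = wsumFirst m j :=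
  sum_congr rfl fun k hk => by simp [(mem_filter.mp hk).2]

lemma wsumLast_ite (m : ℕ) (i j : Idx d N) :
    wsumLast m (fun k => if (k : ℕ) < m then j k else i k) = wsumLast m i :=
  sum_congr rfl fun k hk => by simp [not_lt.mpr (mem_filter.mp hk).2]

lemma wsum_ite (m : ℕ) (i j : Idx d N) :
    wsum (fun k => if (k : ℕ) < m then j k else i k) = wsumFirst m j + wsumLast m i := by
  rw [wsum_eq_wsumFirst_add_wsumLast m, wsumFirst_ite, wsumLast_ite]

lemma RProj_apply (k : ℕ) (i j : Idx d N) :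
    RProj d N k i j = if wsum i = k ∧ wsum j = k then 1 else 0 := by
  simp only [RProj, Rvec, vecMulVec_apply, Pi.star_apply, apply_ite star, star_one, star_zero,
    mul_ite, mul_one, mul_zero]
  split_ifs <;> simp_all

lemma dickeDiag_apply (p : ℕ → ℝ) (i j : Idx d N) :
    dickeDiag d N p i j = if wsum i = wsum j then (p (wsum i) : ℂ) else 0 := by
  simp only [dickeDiag, Matrix.sum_apply, Matrix.smul_apply, RProj_apply, smul_eq_mul, mul_ite,
    mul_one, mul_zero]
  by_cases h : wsum i = wsum j
  · simp [← h, Nat.lt_succ_of_le (wsum_le i)]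
  · rw [if_neg h]
    exact sum_eq_zero fun k _ => if_neg fun hk => h (hk.1.trans hk.2.symm)

lemma gamma_dickeDiag_apply (m : ℕ) (p : ℕ → ℝ) (i j : Idx d N) :
    Gamma m (dickeDiag d N p) i j =
      if wsumFirst m j + wsumLast m i = wsumFirst m i + wsumLast m j then
        (p (wsumFirst m j + wsumLast m i) : ℂ) else 0 := by
  rw [Gamma, of_apply, dickeDiag_apply, wsum_ite, wsum_ite]

def weightPair (m : ℕ) (i : Idx d N) : Fin (m * (d - 1) + 1) × Fin ((N - m) * (d - 1) + 1) :=
  (⟨wsumFirst m i, Nat.lt_succ_of_le (wsumFirst_le m i)⟩,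
    ⟨wsumLast m i, Nat.lt_succ_of_le (wsumLast_le m i)⟩)

lemma weightPair_surjective {m : ℕ} (hd : 0 < d) (hm : m ≤ N) :
    Function.Surjective (weightPair (d := d) (N := N) m) := by
  rintro ⟨a, b⟩
  obtain ⟨g, hg, hga⟩ := exists_sum_eq_of_le_card_mul {j : Fin N | (j : ℕ) < m}
    (c := d - 1) (w := a) (by rw [Fin.card_filter_val_lt, min_eq_right hm]; omega)
  obtain ⟨g', hg', hgb⟩ := exists_sum_eq_of_le_card_mul {j : Fin N | m ≤ (j : ℕ)}
    (c := d - 1) (w := b) (by rw [Fin.card_filter_le_val]; omega)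
  refine ⟨fun j => ⟨if (j : ℕ) < m then g j else g' j, by have := hg j; have := hg' j; split_ifs <;> omega⟩, ?_⟩
  ext <;> simp only [weightPair, wsumFirst, wsumLast]
  · rw [← hga]
    exact sum_congr rfl fun j hj => by simp [(mem_filter.mp hj).2]
  · rw [← hgb]
    exact sum_congr rfl fun j hj => by simp [not_lt.mpr (mem_filter.mp hj).2]

end Weights

section Hankel

variable (p : ℕ → ℝ)

def shiftedHankel (l n : ℕ) : Matrix (Fin n) (Fin n) ℝ :=
  of fun k k' => p (k + k' + l)

def weightPairMatrix (A B : ℕ) : Matrix (Fin A × Fin B) (Fin A × Fin B) ℝ :=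
  of fun x y => if (y.1 : ℕ) + x.2 = x.1 + y.2 then p (y.1 + x.2) else 0

/-- The shift `c` moving the block `s = b - a` of `weightPairMatrix` into the Hankel matrix
`shiftedHankel p (s + 2c)`. Since `s + 2c ≡ s [ZMOD 2]`, landing in `[0, K]` needs `1 ≤ K`. -/
def blockShift (K : ℕ) (s : ℤ) : ℤ :=
  if s < 0 then (1 - s) / 2 else if (K : ℤ) < s then -((s - K + 1) / 2) else 0

lemma add_two_mul_blockShift_bounds {K : ℕ} (hK : 1 ≤ K) (s : ℤ) :
    0 ≤ s + 2 * blockShift K s ∧ s + 2 * blockShift K s ≤ K := by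
  unfold blockShift
  split_ifs <;> omega

lemma sub_blockShift_bounds {K M a b : ℕ} (ha : a ≤ M) (hb : b ≤ M + K) :
    0 ≤ (a : ℤ) - blockShift K (b - a) ∧ (a : ℤ) - blockShift K (b - a) ≤ M := by
  unfold blockShift
  split_ifs <;> omega

variable {p} {M K L : ℕ}

lemma shiftedHankel_eq_submatrix (hL : M + K = L) {l : ℕ} (hl : l ≤ K) :
    shiftedHankel p l (M + 1) = (weightPairMatrix p (M + 1) (L + 1)).submatrix
      (fun k => (k, ⟨k + l, by omega⟩)) (fun k => (k, ⟨k + l, by omega⟩)) := by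
  ext k k'
  simp only [shiftedHankel, weightPairMatrix, of_apply, submatrix_apply]
  rw [if_pos (by omega)]
  congr 1
  omega

lemma posSemidef_weightPairMatrix (hK : 1 ≤ K) (hL : M + K = L)
    (h : ∀ l ≤ K, (shiftedHankel p l (M + 1)).PosSemidef) :
    (weightPairMatrix p (M + 1) (L + 1)).PosSemidef := by
  let s (x : Fin (M + 1) × Fin (L + 1)) : ℤ := x.2 - x.1
  have hx (x : Fin (M + 1) × Fin (L + 1)) :
      0 ≤ (x.1 : ℤ) - blockShift K (s x) ∧ (x.1 : ℤ) - blockShift K (s x) ≤ M :=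
    sub_blockShift_bounds (Nat.lt_succ_iff.mp x.1.isLt) (by have := x.2.isLt; omega)
  refine (congrArg PosSemidef ?_).mpr <| posSemidef_of_blocks
    (fun t => h (t + 2 * blockShift K t).toNat
      (by have := add_two_mul_blockShift_bounds hK t; omega)) s
    (fun x => (⟨((x.1 : ℤ) - blockShift K (s x)).toNat, by have := hx x; omega⟩ : Fin (M + 1)))
  ext x y
  have hsx : s x = (x.2 : ℤ) - x.1 := rfl
  have hsy : s y = (y.2 : ℤ) - y.1 := rfl
  simp only [weightPairMatrix, shiftedHankel, of_apply]
  by_cases hxy : s x = s y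
  · have hy := hx y
    rw [← hxy] at hy ⊢
    have := hx x
    have := add_two_mul_blockShift_bounds hK (s x)
    rw [if_pos (by omega), if_pos rfl]
    congr 1
    omega
  · rw [if_neg (by omega), if_neg hxy]

lemma weightPairMatrix_posSemidef_iff (hK : 1 ≤ K) (hL : M + K = L) :
    (weightPairMatrix p (M + 1) (L + 1)).PosSemidef ↔
      ∀ l ≤ K, (shiftedHankel p l (M + 1)).PosSemidef :=
  ⟨fun h _ hl => shiftedHankel_eq_submatrix hL hl ▸ h.submatrix _,
    posSemidef_weightPairMatrix hK hL⟩

end Hankel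

lemma gamma_dickeDiag_eq_submatrix {d N : ℕ} (m : ℕ) (p : ℕ → ℝ) :
    Gamma m (dickeDiag d N p) =
      ((weightPairMatrix p _ _).map ((↑) : ℝ → ℂ)).submatrix (weightPair m) (weightPair m) := by
  ext i j
  rw [gamma_dickeDiag_apply]
  simp only [submatrix_apply, map_apply, weightPairMatrix, of_apply, weightPair]
  split_ifs <;> simp

theorem stmt10_general (d N m : ℕ) (hd : 2 ≤ d) (hmN : 2 * m < N) (p : ℕ → ℝ) :
    (Gamma m (dickeDiag d N p)).PosSemidef ↔
      ∀ l ≤ (N - 2 * m) * (d - 1),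
        Matrix.PosSemidef
          (Matrix.of fun k k' : Fin (m * (d - 1) + 1) => p ((k : ℕ) + (k' : ℕ) + l)) := by
  have hK : 1 ≤ (N - 2 * m) * (d - 1) :=
    Nat.one_le_iff_ne_zero.mpr (mul_ne_zero (by omega) (by omega))
  have hL : m * (d - 1) + (N - 2 * m) * (d - 1) = (N - m) * (d - 1) := by
    rw [← add_mul]
    congr 1
    omega
  rw [gamma_dickeDiag_eq_submatrix, posSemidef_submatrix_iff_of_surjective
    (weightPair_surjective (by omega) (by omega)), posSemidef_map_ofReal_iff]
  exact weightPairMatrix_posSemidef_iff hK hL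

theorem stmt10 (d N m : ℕ) (hd : 2 ≤ d) (hm : 1 ≤ m) (hmN : 2 * m < N) (p : ℕ → ℝ)
    (hp : ∀ k ≤ N * (d - 1), 0 ≤ p k) :
    (Gamma m (dickeDiag d N p)).PosSemidef ↔
      ∀ l ≤ (N - 2 * m) * (d - 1),
        Matrix.PosSemidef
          (Matrix.of fun k k' : Fin (m * (d - 1) + 1) => p ((k : ℕ) + (k' : ℕ) + l)) :=
  stmt10_general d N m hd hmN p

end DSym
end
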